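/- arXiv:2203.16748 — 6 statements merged into one kernel-verified Lean document; each statement's English description precedes it below -/
import Mathlib

section
/- Let R be a matrix over a field whose columns are indexed 1..n. Define low(j) to be the largest row index of a nonzero entry in column j of R (and low(j) = 0 if column j is zero). If R is reduced, i.e., the low values of nonzero columns are pairwise distinct, then for any invertible upper-triangular matrix V' and any matrix R' with distinct low values of nonzero columns satisfying R'V'⁻¹ = RV⁻¹ for some invertible upper-triangular V, the set of pairs {(low(j), j) : column j of R nonzero} equals {(low'(j), j) : column j of R' nonzero}. (Uniqueness of the persistence pairing under R = DV decompositions.) -/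
open Matrix

variable {F : Type*} [Field F] [DecidableEq F] {m n : ℕ}

/-- The 1-based row index of the lowest (largest-index) nonzero entry of column `j`
of `R`; `0` if the column is zero. -/
def lowNat (R : Matrix (Fin m) (Fin n) F) (j : Fin n) : ℕ :=
  (Finset.univ.filter fun i : Fin m => R i j ≠ 0).sup fun i => i.val + 1

/-- `R` is reduced: the low values of nonzero columns are pairwise distinct. -/
def ReducedMat (R : Matrix (Fin m) (Fin n) F) : Prop :=
  ∀ j₁ j₂ : Fin n, lowNat R j₁ = lowNat R j₂ → lowNat R j₁ ≠ 0 → j₁ = j₂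

/-- `V` is upper triangular: entries strictly below the diagonal vanish. -/
def UpperTriFin (V : Matrix (Fin n) (Fin n) F) : Prop :=
  ∀ i j : Fin n, j < i → V i j = 0

lemma le_lowNat {R : Matrix (Fin m) (Fin n) F} {i : Fin m} {j : Fin n}
    (h : R i j ≠ 0) : i.val + 1 ≤ lowNat R j :=
  Finset.le_sup (f := fun i : Fin m => i.val + 1) (by simp [h])

lemma exists_lowNat {R : Matrix (Fin m) (Fin n) F} {j : Fin n}
    (h : lowNat R j ≠ 0) : ∃ i : Fin m, R i j ≠ 0 ∧ i.val + 1 = lowNat R j := by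
  have hs : (Finset.univ.filter fun i : Fin m => R i j ≠ 0).Nonempty := by
    by_contra hne
    rw [Finset.not_nonempty_iff_eq_empty] at hne
    exact h (by simp [lowNat, hne])
  obtain ⟨i, hi, hie⟩ := Finset.exists_mem_eq_sup _ hs (fun i : Fin m => i.val + 1)
  exact ⟨i, by simpa using hi, hie.symm⟩

lemma lowNat_le_mul (R : Matrix (Fin m) (Fin n) F) (W : Matrix (Fin n) (Fin n) F)
    (hW : UpperTriFin W) (hWd : ∀ k, W k k ≠ 0) (hR : ReducedMat R) (j : Fin n) :
    lowNat R j ≤ lowNat (R * W) j := by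
  rcases eq_or_ne (lowNat R j) 0 with h | h
  · simp [h]
  · set s := Finset.univ.filter (fun k : Fin n => W k j ≠ 0) with hsdef
    have hjs : j ∈ s := by simp [hsdef, hWd j]
    obtain ⟨k0, hk0s, hk0⟩ := Finset.exists_mem_eq_sup s ⟨j, hjs⟩ (fun k => lowNat R k)
    have hL'ge : lowNat R j ≤ lowNat R k0 := hk0 ▸ Finset.le_sup hjs
    have hk0ne : lowNat R k0 ≠ 0 := fun h0 => h (Nat.le_zero.mp (h0 ▸ hL'ge))
    obtain ⟨i0, hi0ne, hi0⟩ := exists_lowNat hk0ne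
    have hW0 : W k0 j ≠ 0 := by simpa [hsdef] using hk0s
    have hval : (R * W) i0 j = R i0 k0 * W k0 j := by
      rw [Matrix.mul_apply]
      refine Finset.sum_eq_single k0 (fun k _ hk => ?_) (by simp)
      rcases eq_or_ne (W k j) 0 with hw | hw
      · simp [hw]
      · have hks : k ∈ s := by simp [hsdef, hw]
        have hle : lowNat R k ≤ lowNat R k0 := hk0 ▸ Finset.le_sup hks
        have hne : lowNat R k ≠ lowNat R k0 := fun he => hk (hR k k0 he (fun h0 => hk0ne (he ▸ h0)))
        have hz : R i0 k = 0 := by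
          by_contra hrz
          have := le_lowNat hrz
          omega
        simp [hz]
    have hne : (R * W) i0 j ≠ 0 := hval ▸ mul_ne_zero hi0ne hW0
    calc lowNat R j ≤ lowNat R k0 := hL'ge
      _ = i0.val + 1 := hi0.symm
      _ ≤ lowNat (R * W) j := le_lowNat hne

lemma diag_ne_zero_of_upper {W : Matrix (Fin n) (Fin n) F} (hW : UpperTriFin W)
    (hu : IsUnit W) (k : Fin n) : W k k ≠ 0 := by
  have hd : IsUnit W.det := (Matrix.isUnit_iff_isUnit_det W).mp hu
  rw [Matrix.det_of_upperTriangular (fun i j h => hW i j h)] at hd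
  intro h0
  exact hd.ne_zero (Finset.prod_eq_zero (Finset.mem_univ k) h0)


/-- Uniqueness of the persistence pairing under `R = DV` decompositions:
if `R V⁻¹ = R' V'⁻¹` for invertible upper-triangular `V, V'` and both `R, R'`
are reduced, then the sets of pairs `(low(j), j)` over nonzero columns agree. -/
theorem singleton_pairing_uniqueness
    (R R' : Matrix (Fin m) (Fin n) F) (V V' : Matrix (Fin n) (Fin n) F)
    (hV : UpperTriFin V) (hV' : UpperTriFin V')
    (hVunit : IsUnit V) (hV'unit : IsUnit V')
    (hR : ReducedMat R) (hR' : ReducedMat R')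
    (hD : R' * V'⁻¹ = R * V⁻¹) :
    {p : ℕ × Fin n | ∃ j : Fin n, lowNat R j ≠ 0 ∧ p = (lowNat R j, j)} =
      {p : ℕ × Fin n | ∃ j : Fin n, lowNat R' j ≠ 0 ∧ p = (lowNat R' j, j)} := by
  have hVd : IsUnit V.det := (Matrix.isUnit_iff_isUnit_det V).mp hVunit
  have hV'd : IsUnit V'.det := (Matrix.isUnit_iff_isUnit_det V').mp hV'unit
  letI : Invertible V := hVunit.invertible
  letI : Invertible V' := hV'unit.invertible
  set W : Matrix (Fin n) (Fin n) F := V⁻¹ * V' with hWdef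
  set W' : Matrix (Fin n) (Fin n) F := V'⁻¹ * V with hW'def
  have hRW : R * W = R' := by
    rw [hWdef, ← Matrix.mul_assoc, ← hD, Matrix.mul_assoc,
      Matrix.nonsing_inv_mul V' hV'd, Matrix.mul_one]
  have hRW' : R' * W' = R := by
    rw [hW'def, ← Matrix.mul_assoc, hD, Matrix.mul_assoc,
      Matrix.nonsing_inv_mul V hVd, Matrix.mul_one]
  have hVinvTri : UpperTriFin V⁻¹ := fun i j h =>
    Matrix.blockTriangular_inv_of_blockTriangular (fun i j h => hV i j h) h
  have hV'invTri : UpperTriFin V'⁻¹ := fun i j h =>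
    Matrix.blockTriangular_inv_of_blockTriangular (fun i j h => hV' i j h) h
  have hWtri : UpperTriFin W := fun i j h =>
    (Matrix.BlockTriangular.mul (fun i j h => hVinvTri i j h) (fun i j h => hV' i j h)) h
  have hW'tri : UpperTriFin W' := fun i j h =>
    (Matrix.BlockTriangular.mul (fun i j h => hV'invTri i j h) (fun i j h => hV i j h)) h
  have hWu : IsUnit W := ((Matrix.isUnit_nonsing_inv_iff.mpr hVunit)).mul hV'unit
  have hW'u : IsUnit W' := ((Matrix.isUnit_nonsing_inv_iff.mpr hV'unit)).mul hVunit
  have hlow : lowNat R = lowNat R' := by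
    funext j
    refine le_antisymm ?_ ?_
    · have := lowNat_le_mul R W hWtri (diag_ne_zero_of_upper hWtri hWu) hR j
      rwa [hRW] at this
    · have := lowNat_le_mul R' W' hW'tri (diag_ne_zero_of_upper hW'tri hW'u) hR' j
      rwa [hRW'] at this
  rw [hlow]
end

section
/- Let R = DV and D = RU be decompositions obtained by the lazy reduction algorithm, with R reduced. If U[τ_i, τ_j] ≠ 0 for τ_i ≠ τ_j, then low_R(τ_j) < low_R(τ_i), where a zero column has low equal to a dummy minimal value. -/
/-!
Each elimination step of the lazy reduction subtracts a multiple of column `i` from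
column `j`, where `i < j` and both columns have the same low, and records the inverse
operation in `U` by adding a multiple of row `j` to row `i`. The invariant is that every
off-diagonal nonzero entry `U[a, b]` has `low_R(b) < low_R(a)`. It holds for `U = 1` and
survives each step: while column `j` is processed, row `j` of `U` is still a row of the
identity (only rows of earlier columns are ever changed), so the step can only create the
entry `U[i, j]`, and the new low of column `j` is strictly below `low(i) = low(j)`.
-/

open Matrix

variable {F : Type*} [Field F] [DecidableEq F] {m n : ℕ}

/-- Subtract `α` times column `i` from column `j`. -/
def addColMul {k : ℕ} (M : Matrix (Fin k) (Fin n) F) (α : F) (i j : Fin n) :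
    Matrix (Fin k) (Fin n) F :=
  fun a b => if b = j then M a b - α * M a i else M a b

/-- Add `α` times row `j` to row `i`. -/
def addRowMul (M : Matrix (Fin n) (Fin n) F) (α : F) (i j : Fin n) :
    Matrix (Fin n) (Fin n) F :=
  fun a b => if a = i then M a b + α * M j b else M a b

/-- The state `(R, V, U)` maintained by the lazy reduction. -/
structure RedState (F : Type*) (m n : ℕ) where
  R : Matrix (Fin m) (Fin n) F
  V : Matrix (Fin n) (Fin n) F
  U : Matrix (Fin n) (Fin n) F

/-- Inner while-loop of the lazy reduction for column `j`: while the column is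
nonzero and some earlier column has the same low, subtract
`α = R[low, j] / R[low, i]` times column `i` from column `j` (in `R` and `V`)
and record the inverse row operation in `U`.  Each iteration strictly decreases
the low of column `j`, so fuel `m + 1` always suffices. -/
noncomputable def reduceColAux : ℕ → RedState F m n → Fin n → RedState F m n
  | 0, s, _ => s
  | fuel + 1, s, j =>
    if h : lowNat s.R j ≠ 0 ∧ ∃ i : Fin n, i < j ∧ lowNat s.R i = lowNat s.R j then
      let i := h.2.choose
      let r : Fin m := ⟨lowNat s.R j - 1, by
        have hle : lowNat s.R j ≤ m := Finset.sup_le fun a _ => a.isLt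
        have := h.1
        omega⟩
      let α := s.R r j / s.R r i
      reduceColAux fuel ⟨addColMul s.R α i j, addColMul s.V α i j, addRowMul s.U α i j⟩ j
    else s

/-- The lazy reduction algorithm: starting from `R = D`, `V = U = 1`, process
the columns in increasing order. -/
noncomputable def lazyReduce (D : Matrix (Fin m) (Fin n) F) : RedState F m n :=
  (List.finRange n).foldl (fun s j => reduceColAux (m + 1) s j) ⟨D, 1, 1⟩

lemma lowNat_le_iff (R : Matrix (Fin m) (Fin n) F) (j : Fin n) (k : ℕ) :
    lowNat R j ≤ k ↔ ∀ a : Fin m, R a j ≠ 0 → a.val + 1 ≤ k := by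
  simp [lowNat, Finset.sup_le_iff]

lemma le_lowNat_of_ne_zero {R : Matrix (Fin m) (Fin n) F} {j : Fin n} {a : Fin m}
    (h : R a j ≠ 0) : a.val + 1 ≤ lowNat R j :=
  (lowNat_le_iff R j _).1 le_rfl a h

lemma eq_zero_of_lowNat_lt {R : Matrix (Fin m) (Fin n) F} {j : Fin n} {a : Fin m}
    (h : lowNat R j < a.val + 1) : R a j = 0 := by
  by_contra ha
  exact (le_lowNat_of_ne_zero ha).not_gt h

lemma ne_zero_of_succ_eq_lowNat {R : Matrix (Fin m) (Fin n) F} {j : Fin n} {r : Fin m}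
    (hr : r.val + 1 = lowNat R j) : R r j ≠ 0 := by
  intro hr0
  suffices lowNat R j ≤ r.val by omega
  refine (lowNat_le_iff R j _).2 fun a ha => ?_
  have har : a.val ≠ r.val := fun h => ha (Fin.ext h ▸ hr0)
  have := le_lowNat_of_ne_zero ha
  omega

lemma lowNat_addColMul_of_ne (M : Matrix (Fin m) (Fin n) F) (α : F) {i j b : Fin n}
    (hb : b ≠ j) : lowNat (addColMul M α i j) b = lowNat M b := by
  simp [lowNat, addColMul, hb]

lemma lowNat_addColMul_lt (M : Matrix (Fin m) (Fin n) F) {i j : Fin n} {r : Fin m}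
    (hr : r.val + 1 = lowNat M j) (hij : lowNat M i = lowNat M j) :
    lowNat (addColMul M (M r j / M r i) i j) j < lowNat M j := by
  have hri : M r i ≠ 0 := ne_zero_of_succ_eq_lowNat (hr.trans hij.symm)
  suffices lowNat (addColMul M (M r j / M r i) i j) j ≤ r.val by omega
  refine (lowNat_le_iff _ j _).2 fun a ha => ?_
  by_contra hra
  simp only [addColMul, if_true] at ha
  rcases (show r ≤ a by omega).eq_or_lt with rfl | hlt
  · exact ha (by rw [div_mul_cancel₀ _ hri, sub_self])
  · have haj : M a j = 0 := eq_zero_of_lowNat_lt (by omega)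
    have hai : M a i = 0 := eq_zero_of_lowNat_lt (by omega)
    exact ha (by rw [haj, hai, mul_zero, sub_zero])

def LowCompatible (R : Matrix (Fin m) (Fin n) F) (U : Matrix (Fin n) (Fin n) F) : Prop :=
  ∀ a b : Fin n, a ≠ b → U a b ≠ 0 → lowNat R b < lowNat R a

lemma lowCompatible_one (R : Matrix (Fin m) (Fin n) F) : LowCompatible R 1 :=
  fun _ _ hab hU => absurd (one_apply_ne hab) hU

lemma LowCompatible.addColMul_addRowMul {R : Matrix (Fin m) (Fin n) F}
    {U : Matrix (Fin n) (Fin n) F} (hRU : LowCompatible R U) (α : F) {i j : Fin n}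
    (hji : lowNat R j ≤ lowNat R i)
    (hlt : lowNat (addColMul R α i j) j < lowNat R j)
    (hrow : ∀ b, b ≠ j → U j b = 0) :
    LowCompatible (addColMul R α i j) (addRowMul U α i j) := by
  intro a b hab hU
  by_cases hb : b = j
  · subst hb
    rw [lowNat_addColMul_of_ne R α hab]
    by_cases ha : a = i
    · subst ha
      exact hlt.trans_le hji
    · have hU' : U a b ≠ 0 := by simpa [addRowMul, ha] using hU
      exact hlt.trans (hRU a b hab hU')
  · rw [lowNat_addColMul_of_ne R α hb]
    have hU' : U a b ≠ 0 := by
      by_cases ha : a = i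
      · simpa [addRowMul, ha, hrow b hb] using hU
      · simpa [addRowMul, ha] using hU
    by_cases haj : a = j
    · exact absurd (hrow b hb) (haj ▸ hU')
    · rw [lowNat_addColMul_of_ne R α haj]
      exact hRU a b hab hU'

lemma reduceColAux_U_of_le (fuel : ℕ) (s : RedState F m n) {j a : Fin n} (hja : j ≤ a) :
    (reduceColAux fuel s j).U a = s.U a := by
  induction fuel generalizing s with
  | zero => rfl
  | succ k ih =>
    rw [reduceColAux]
    split
    · next h =>
      rw [ih]
      funext b
      have hia : h.2.choose ≠ a := (h.2.choose_spec.1.trans_le hja).ne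
      simp [addRowMul, hia.symm]
    · rfl

lemma lowCompatible_reduceColAux {s : RedState F m n} (hs : LowCompatible s.R s.U)
    (fuel : ℕ) {j : Fin n} (hrow : ∀ b, b ≠ j → s.U j b = 0) :
    LowCompatible (reduceColAux fuel s j).R (reduceColAux fuel s j).U := by
  induction fuel generalizing s with
  | zero => exact hs
  | succ k ih =>
    rw [reduceColAux]
    split
    · next h =>
      obtain ⟨hij, hlowi⟩ := h.2.choose_spec
      refine ih (hs.addColMul_addRowMul _ hlowi.ge
        (lowNat_addColMul_lt s.R ?_ hlowi) hrow) fun b hb => ?_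
      · exact Nat.sub_add_cancel (Nat.pos_of_ne_zero h.1)
      · simpa [addRowMul, hij.ne'] using hrow b hb
    · exact hs

lemma lowCompatible_foldl_reduceColAux (fuel : ℕ) {l : List (Fin n)} (hl : l.Pairwise (· < ·))
    {s : RedState F m n} (hs : LowCompatible s.R s.U)
    (hrows : ∀ j ∈ l, ∀ b, b ≠ j → s.U j b = 0) :
    LowCompatible (l.foldl (fun s j => reduceColAux fuel s j) s).R
      (l.foldl (fun s j => reduceColAux fuel s j) s).U := by
  induction l generalizing s with
  | nil => exact hs
  | cons j t ih =>
    obtain ⟨hjt, ht⟩ := List.pairwise_cons.1 hl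
    refine ih ht (lowCompatible_reduceColAux hs _ (hrows j List.mem_cons_self))
      fun j' hj' b hb => ?_
    rw [reduceColAux_U_of_le _ _ (hjt j' hj').le]
    exact hrows j' (List.mem_cons_of_mem j hj') b hb

/-- If `R = DV`, `D = RU` are obtained by the lazy reduction and
`U[τi, τj] ≠ 0` for `τi ≠ τj`, then `low_R(τj) < low_R(τi)`
(zero columns having the dummy minimal low `0`). -/
theorem lazy_U_nonzero_implies_low_lt (D : Matrix (Fin m) (Fin n) F) (τi τj : Fin n)
    (hne : τi ≠ τj) (hU : (lazyReduce D).U τi τj ≠ 0) :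
    lowNat (lazyReduce D).R τj < lowNat (lazyReduce D).R τi :=
  lowCompatible_foldl_reduceColAux (m + 1) (List.pairwise_lt_finRange n) (lowCompatible_one D)
    (fun _ _ _ hb => one_apply_ne hb.symm) τi τj hne hU
end

section
/- Let K be a finite simplicial complex with a filtration given by a total order on simplices compatible with the face relation, and let two simplices σ₁, σ₂ that appear consecutively in the filtration order be transposed (assuming neither is a face of the other, so the result is again a filtration). Then the persistence pairing of the new filtration agrees with that of the old filtration on every pair not involving σ₁ or σ₂; only the pairs with σ₁ or σ₂ as an endpoint can change. -/
/-!
By the pairing lemma, `(σ, τ)` is a persistence pair exactly when an alternating sum of the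
ranks of four lower-left corners of the boundary matrix equals `1`. These ranks do not change
under right multiplication by an invertible upper-triangular matrix, and in a reduced `R = D V`
the nonzero columns have distinct lows, hence are linearly independent; so the rank of the
corner with rows from `σ` on and columns up to `τ` counts the columns up to `τ` whose low is at
or after `σ`, and the alternating sum is `1` iff the low of `τ` is `σ`. The condition depends
only on which simplices precede and follow `σ` and `τ`, and transposing two consecutive
simplices other than `σ` and `τ` changes neither.
-/
open Matrix

/-- A finite abstract simplicial complex: a finite family of nonempty finite
sets closed under taking nonempty subsets. -/
def IsComplex (K : Finset (Finset ℕ)) : Prop :=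
  (∀ τ ∈ K, τ.Nonempty) ∧ ∀ τ ∈ K, ∀ σ : Finset ℕ, σ ⊆ τ → σ.Nonempty → σ ∈ K

/-- The simplices of the complex `K`. -/
abbrev Simp (K : Finset (Finset ℕ)) := {σ : Finset ℕ // σ ∈ K}

/-- A filtration order on the simplices, given by an injective position
function compatible with the face relation. -/
def IsSimpFiltration (K : Finset (Finset ℕ)) (pos : Simp K → ℕ) : Prop :=
  Function.Injective pos ∧ ∀ σ τ : Simp K, σ.1 ⊆ τ.1 → σ ≠ τ → pos σ < pos τ

/-- The (full) boundary matrix of `K` over `ℤ/2`. -/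
def bdry (K : Finset (Finset ℕ)) : Matrix (Simp K) (Simp K) (ZMod 2) :=
  fun σ τ => if σ.1 ⊆ τ.1 ∧ σ.1.card + 1 = τ.1.card then 1 else 0

/-- `σ` is the low of column `τ` of `R` with respect to the order `pos`:
the entry `R σ τ` is nonzero and `σ` is the last such row. -/
def IsLow (K : Finset (Finset ℕ)) (pos : Simp K → ℕ)
    (R : Matrix (Simp K) (Simp K) (ZMod 2)) (τ σ : Simp K) : Prop :=
  R σ τ ≠ 0 ∧ ∀ σ' : Simp K, R σ' τ ≠ 0 → pos σ' ≤ pos σ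

/-- `(σ, τ)` is a persistence pair of the filtration `pos`: in some (hence, by
pairing uniqueness, any) reduced decomposition `R = D V` of the boundary matrix,
with `V` invertible and upper-triangular with respect to `pos`, the low of
column `τ` is `σ`. -/
def PersPair (K : Finset (Finset ℕ)) (pos : Simp K → ℕ) (σ τ : Simp K) : Prop :=
  ∃ R Vm : Matrix (Simp K) (Simp K) (ZMod 2),
    (∀ a b : Simp K, pos b < pos a → Vm a b = 0) ∧ IsUnit Vm ∧
    R = bdry K * Vm ∧
    (∀ τ₁ τ₂ s : Simp K, IsLow K pos R τ₁ s → IsLow K pos R τ₂ s → τ₁ = τ₂) ∧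
    IsLow K pos R τ σ

open Set

namespace Matrix

variable {ι α : Type*} (R : Type*) [Fintype ι] [DecidableEq ι] [CommRing R]

noncomputable def mask (S : Set ι) : Matrix ι ι R := diagonal (S.indicator 1)

variable {R}

open scoped Classical in
lemma mask_mul_mul_mask_apply (M : Matrix ι ι R) (S T : Set ι) (s t : ι) :
    (mask R S * M * mask R T) s t = if s ∈ S ∧ t ∈ T then M s t else 0 := by
  by_cases hs : s ∈ S <;> by_cases ht : t ∈ T <;> simp [mask, hs, ht]

variable [LinearOrder α] {q : ι → α}

lemma BlockTriangular.mask_mul_mul_mask {V : Matrix ι ι R} (hV : V.BlockTriangular q)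
    {L : Set α} (hL : IsLowerSet L) :
    mask R (q ⁻¹' L) * V * mask R (q ⁻¹' L) = V * mask R (q ⁻¹' L) := by
  ext u t
  by_cases ht : q t ∈ L
  · by_cases hu : q u ∈ L
    · simp [mask, ht, hu]
    · have : V u t = 0 := hV (lt_of_not_ge fun h => hu (hL h ht))
      simp [mask, ht, hu, this]
  · simp [mask, ht]

lemma rank_mul_mul_mask_of_blockTriangular [Nontrivial R] {m : Type*} (A : Matrix m ι R)
    {V : Matrix ι ι R} (hV : V.BlockTriangular q) (hVu : IsUnit V) {L : Set α}
    (hL : IsLowerSet L) :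
    (A * V * mask R (q ⁻¹' L)).rank = (A * mask R (q ⁻¹' L)).rank := by
  have := hVu.invertible
  have hVinv : V⁻¹.BlockTriangular q := blockTriangular_inv_of_blockTriangular hV
  have h₁ : A * mask R (q ⁻¹' L) * (V * mask R (q ⁻¹' L)) = A * V * mask R (q ⁻¹' L) := by
    rw [Matrix.mul_assoc A, ← Matrix.mul_assoc (mask R _), hV.mask_mul_mul_mask hL,
      ← Matrix.mul_assoc]
  have h₂ : A * V * mask R (q ⁻¹' L) * (V⁻¹ * mask R (q ⁻¹' L)) = A * mask R (q ⁻¹' L) := by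
    rw [Matrix.mul_assoc (A * V), ← Matrix.mul_assoc (mask R _), hVinv.mask_mul_mul_mask hL,
      Matrix.mul_assoc A, ← Matrix.mul_assoc V, mul_inv_of_invertible, Matrix.one_mul]
  apply le_antisymm
  · rw [← h₁]; exact rank_mul_le_left _ _
  · rw [← h₂]; exact rank_mul_le_left _ _

end Matrix

section CornerRank

variable {ι α R : Type*} [Fintype ι] [DecidableEq ι] [CommRing R]

noncomputable def cornerRank (D : Matrix ι ι R) (S T : Set ι) : ℕ :=
  (mask R S * D * mask R T).rank

lemma cornerRank_mul_of_blockTriangular [Nontrivial R] [LinearOrder α] {q : ι → α}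
    (D : Matrix ι ι R) {V : Matrix ι ι R} (hV : V.BlockTriangular q) (hVu : IsUnit V)
    (S : Set ι) {L : Set α} (hL : IsLowerSet L) :
    cornerRank (D * V) S (q ⁻¹' L) = cornerRank D S (q ⁻¹' L) := by
  simpa only [cornerRank, Matrix.mul_assoc] using
    Matrix.rank_mul_mul_mask_of_blockTriangular (mask R S * D) hV hVu hL

/-- `r(σ, τ) - r(σ⁺, τ) - r(σ, τ⁻) + r(σ⁺, τ⁻) = 1` for `r = cornerRank D`, with rows from `σ`
(`σ⁺`: after `σ`) and columns up to `τ` (`τ⁻`: before `τ`), rearranged to avoid truncated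
subtraction. -/
def IsRankPair [Preorder α] (q : ι → α) (D : Matrix ι ι R) (σ τ : ι) : Prop :=
  cornerRank D (q ⁻¹' Ici (q σ)) (q ⁻¹' Iic (q τ))
      + cornerRank D (q ⁻¹' Ioi (q σ)) (q ⁻¹' Iio (q τ))
    = cornerRank D (q ⁻¹' Ioi (q σ)) (q ⁻¹' Iic (q τ))
      + cornerRank D (q ⁻¹' Ici (q σ)) (q ⁻¹' Iio (q τ)) + 1

end CornerRank

section Lows

variable {K : Finset (Finset ℕ)} {q : Simp K → ℕ} {R : Matrix (Simp K) (Simp K) (ZMod 2)}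

def IsReducedMatrix (K : Finset (Finset ℕ)) (q : Simp K → ℕ)
    (R : Matrix (Simp K) (Simp K) (ZMod 2)) : Prop :=
  ∀ τ₁ τ₂ s : Simp K, IsLow K q R τ₁ s → IsLow K q R τ₂ s → τ₁ = τ₂

lemma IsLow.unique (hq : Function.Injective q) {t s s' : Simp K} (h : IsLow K q R t s)
    (h' : IsLow K q R t s') : s = s' :=
  hq (le_antisymm (h'.2 _ h.1) (h.2 _ h'.1))

lemma exists_isLow_of_ne_zero {s t : Simp K} (h : R s t ≠ 0) : ∃ s', IsLow K q R t s' := by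
  obtain ⟨s', hs', hmax⟩ := (Finset.univ.filter (R · t ≠ 0)).exists_max_image q ⟨s, by simpa⟩
  exact ⟨s', (Finset.mem_filter.1 hs').2, fun s'' h'' => hmax s'' (by simpa)⟩

lemma isLow_mask_mul_mul_mask_iff {U : Set ℕ} (hU : IsUpperSet U) (T : Set (Simp K))
    (t s : Simp K) :
    IsLow K q (mask (ZMod 2) (q ⁻¹' U) * R * mask (ZMod 2) T) t s ↔
      t ∈ T ∧ q s ∈ U ∧ IsLow K q R t s := by
  constructor
  · rintro ⟨hne, hmax⟩
    rw [mask_mul_mul_mask_apply] at hne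
    split_ifs at hne with hst
    · refine ⟨hst.2, hst.1, hne, fun s' hs' => ?_⟩
      by_contra! hlt
      refine absurd (hmax s' ?_) hlt.not_ge
      rwa [mask_mul_mul_mask_apply, if_pos ⟨hU hlt.le hst.1, hst.2⟩]
    · exact absurd rfl hne
  · rintro ⟨ht, hs, hne, hmax⟩
    refine ⟨by rwa [mask_mul_mul_mask_apply, if_pos ⟨hs, ht⟩], fun s' hs' => hmax s' ?_⟩
    rw [mask_mul_mul_mask_apply] at hs'
    split_ifs at hs'
    · exact hs'
    · exact absurd rfl hs'

lemma IsReducedMatrix.mask_mul_mul_mask (hR : IsReducedMatrix K q R) {U : Set ℕ}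
    (hU : IsUpperSet U) (T : Set (Simp K)) :
    IsReducedMatrix K q (mask (ZMod 2) (q ⁻¹' U) * R * mask (ZMod 2) T) :=
  fun _ _ s h₁ h₂ => hR _ _ s ((isLow_mask_mul_mul_mask_iff hU T _ s).1 h₁).2.2
    ((isLow_mask_mul_mul_mask_iff hU T _ s).1 h₂).2.2

/-- In a vanishing combination of columns with distinct lows, the column whose low comes last
is the only one with a nonzero entry in that row. -/
lemma IsReducedMatrix.linearIndepOn_col (hq : Function.Injective q)
    (hR : IsReducedMatrix K q R) : LinearIndepOn (ZMod 2) R.col {t | ∃ s, IsLow K q R t s} := by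
  choose! low hlow using fun t (ht : t ∈ {t | ∃ s, IsLow K q R t s}) => ht
  rw [LinearIndepOn, linearIndependent_iff']
  intro u g hsum i hi
  by_contra hgi
  obtain ⟨t, ht, hmax⟩ := (u.filter (g · ≠ 0)).exists_max_image (fun t => q (low t))
    ⟨i, Finset.mem_filter.2 ⟨hi, hgi⟩⟩
  rw [Finset.mem_filter] at ht
  have hrow := congrFun hsum (low t)
  rw [Finset.sum_apply, Finset.sum_eq_single t] at hrow
  · exact mul_ne_zero ht.2 (hlow t t.2).1 hrow
  · intro b hb hbt
    by_cases hgb : g b = 0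
    · simp [hgb]
    have hRb : R (low t) b = 0 := by
      by_contra hRb
      have hle : q (low b) ≤ q (low t) := hmax b (Finset.mem_filter.2 ⟨hb, hgb⟩)
      have heq : low b = low t := hq (le_antisymm hle ((hlow b b.2).2 _ hRb))
      exact hbt (Subtype.ext (hR _ _ _ (heq ▸ hlow b b.2) (hlow t t.2)))
    simp [Matrix.col, hRb]
  · exact fun h => absurd ht.1 h

lemma IsReducedMatrix.rank_eq_ncard (hq : Function.Injective q) (hR : IsReducedMatrix K q R) :
    R.rank = {t | ∃ s, IsLow K q R t s}.ncard := by
  set Z := {t | ∃ s, IsLow K q R t s}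
  have hspan : Submodule.span (ZMod 2) (range R.col) = Submodule.span (ZMod 2) (R.col '' Z) := by
    refine le_antisymm (Submodule.span_le.2 ?_) (Submodule.span_mono (image_subset_range _ _))
    rintro _ ⟨t, rfl⟩
    by_cases ht : t ∈ Z
    · exact Submodule.subset_span ⟨t, ht, rfl⟩
    · have : R.col t = 0 := funext fun s => by
        by_contra hst
        exact ht (exists_isLow_of_ne_zero hst)
      rw [this]
      exact zero_mem _
  rw [Matrix.rank_eq_finrank_span_cols, hspan, Module.finrank, ← Cardinal.toNat_toENat,
    toENat_rank_span_set (hR.linearIndepOn_col hq)]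
  rfl

end Lows

section Reduction

variable {K : Finset (Finset ℕ)} {q : Simp K → ℕ} {R : Matrix (Simp K) (Simp K) (ZMod 2)}

def colHeight (q : Simp K → ℕ) (R : Matrix (Simp K) (Simp K) (ZMod 2)) (t : Simp K) : ℕ :=
  (Finset.univ.filter (R · t ≠ 0)).sup (q · + 1)

lemma colHeight_le_iff {t : Simp K} {n : ℕ} :
    colHeight q R t ≤ n ↔ ∀ s, R s t ≠ 0 → q s < n := by
  simp [colHeight, Finset.sup_le_iff]

lemma lt_colHeight {s t : Simp K} (h : R s t ≠ 0) : q s < colHeight q R t :=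
  Nat.succ_le_iff.1 (Finset.le_sup (f := (q · + 1)) (by simpa))

lemma colHeight_mul_transvection_of_ne {t₁ t₂ t : Simp K} (c : ZMod 2) (ht : t ≠ t₂) :
    colHeight q (R * transvection t₁ t₂ c) t = colHeight q R t := by
  simp only [colHeight, mul_transvection_apply_of_ne t₁ t₂ _ _ ht]

/-- Over `ZMod 2`, adding a column to a later one with the same low cancels that low. -/
lemma colHeight_mul_transvection_lt (hq : Function.Injective q) {t₁ t₂ s : Simp K}
    (h₁ : IsLow K q R t₁ s) (h₂ : IsLow K q R t₂ s) :
    colHeight q (R * transvection t₁ t₂ 1) t₂ < colHeight q R t₂ := by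
  refine lt_of_le_of_lt (colHeight_le_iff.2 fun a ha => ?_) (lt_colHeight h₂.1)
  rw [mul_transvection_apply_same, one_mul] at ha
  rcases lt_trichotomy (q a) (q s) with h | h | h
  · exact h
  · obtain rfl := hq h
    have hsum : ∀ x y : ZMod 2, x ≠ 0 → y ≠ 0 → x + y = 0 := by decide
    exact absurd (hsum _ _ h₂.1 h₁.1) ha
  · have hlow : ∀ t, IsLow K q R t s → R a t = 0 := fun t ht =>
      by_contra fun hat => h.not_ge (ht.2 a hat)
    exact absurd (by rw [hlow t₁ h₁, hlow t₂ h₂, add_zero]) ha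

lemma sum_colHeight_mul_transvection_lt (hq : Function.Injective q) {t₁ t₂ s : Simp K}
    (h₁ : IsLow K q R t₁ s) (h₂ : IsLow K q R t₂ s) :
    ∑ t, colHeight q (R * transvection t₁ t₂ 1) t < ∑ t, colHeight q R t := by
  refine Finset.sum_lt_sum (fun t _ => ?_)
    ⟨t₂, Finset.mem_univ _, colHeight_mul_transvection_lt hq h₁ h₂⟩
  rcases eq_or_ne t t₂ with rfl | ht
  · exact (colHeight_mul_transvection_lt hq h₁ h₂).le
  · exact (colHeight_mul_transvection_of_ne 1 ht).le

/-- The standard reduction algorithm: while two columns share a low, add the earlier one to the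
later one; the total column height strictly decreases. -/
theorem exists_isReducedMatrix_mul (hq : Function.Injective q)
    (D : Matrix (Simp K) (Simp K) (ZMod 2)) :
    ∃ V : Matrix (Simp K) (Simp K) (ZMod 2),
      V.BlockTriangular q ∧ IsUnit V ∧ IsReducedMatrix K q (D * V) := by
  suffices ∀ n V, ∑ t, colHeight q (D * V) t = n → V.BlockTriangular q → IsUnit V →
      ∃ V', V'.BlockTriangular q ∧ IsUnit V' ∧ IsReducedMatrix K q (D * V') from
    this _ 1 rfl blockTriangular_one isUnit_one
  intro n
  induction n using Nat.strong_induction_on with | _ n ih =>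
  intro V hn hV hVu
  by_cases hred : IsReducedMatrix K q (D * V)
  · exact ⟨V, hV, hVu, hred⟩
  obtain ⟨t₁, t₂, s, h₁, h₂, hlt⟩ : ∃ t₁ t₂ s, IsLow K q (D * V) t₁ s ∧
      IsLow K q (D * V) t₂ s ∧ q t₁ < q t₂ := by
    simp only [IsReducedMatrix, not_forall] at hred
    obtain ⟨a, b, s, ha, hb, hab⟩ := hred
    rcases lt_or_gt_of_ne (hq.ne hab) with h | h
    exacts [⟨a, b, s, ha, hb, h⟩, ⟨b, a, s, hb, ha, h⟩]
  have hne : t₁ ≠ t₂ := fun h => hlt.ne (congrArg q h)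
  refine ih _ ?_ (V * transvection t₁ t₂ 1) rfl (hV.mul (blockTriangular_transvection hlt.le 1))
    (hVu.mul ((isUnit_iff_isUnit_det _).2 (by simp [det_transvection_of_ne _ _ hne])))
  rw [← hn, ← Matrix.mul_assoc]
  exact sum_colHeight_mul_transvection_lt hq h₁ h₂

end Reduction

section Pairing

variable {K : Finset (Finset ℕ)} {q : Simp K → ℕ} {R : Matrix (Simp K) (Simp K) (ZMod 2)}

noncomputable def lowCount (q : Simp K → ℕ) (R : Matrix (Simp K) (Simp K) (ZMod 2))
    (S T : Set (Simp K)) : ℕ :=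
  {t | t ∈ T ∧ ∃ s ∈ S, IsLow K q R t s}.ncard

lemma cornerRank_eq_lowCount (hq : Function.Injective q) {D V : Matrix (Simp K) (Simp K) (ZMod 2)}
    (hV : V.BlockTriangular q) (hVu : IsUnit V) (hR : IsReducedMatrix K q (D * V))
    {U L : Set ℕ} (hU : IsUpperSet U) (hL : IsLowerSet L) :
    cornerRank D (q ⁻¹' U) (q ⁻¹' L) = lowCount q (D * V) (q ⁻¹' U) (q ⁻¹' L) := by
  rw [← cornerRank_mul_of_blockTriangular D hV hVu _ hL, cornerRank,
    (hR.mask_mul_mul_mask hU _).rank_eq_ncard hq, lowCount]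
  congr 1
  ext t
  simp only [mem_ofPred_eq, isLow_mask_mul_mul_mask_iff hU, mem_preimage]
  constructor
  · rintro ⟨s, ht, hs, hl⟩
    exact ⟨ht, s, hs, hl⟩
  · rintro ⟨ht, s, hs, hl⟩
    exact ⟨s, ht, hs, hl⟩

open scoped Classical in
lemma lowCount_preimage_Iic (hq : Function.Injective q) (S : Set (Simp K)) (τ : Simp K) :
    lowCount q R S (q ⁻¹' Iic (q τ))
      = lowCount q R S (q ⁻¹' Iio (q τ)) + if ∃ s ∈ S, IsLow K q R τ s then 1 else 0 := by
  have hle : ∀ t, q t ≤ q τ ↔ q t < q τ ∨ t = τ := fun t => le_iff_lt_or_eq.trans (by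
    rw [hq.eq_iff])
  unfold lowCount
  split_ifs with hτ
  · rw [← ncard_insert_of_notMem (fun h => lt_irrefl (q τ) h.1) (toFinite _)]
    congr 1
    ext t
    simp only [mem_ofPred_eq, mem_insert_iff, mem_preimage, mem_Iic, mem_Iio, hle]
    constructor
    · rintro ⟨ht | rfl, hs⟩
      exacts [Or.inr ⟨ht, hs⟩, Or.inl rfl]
    · rintro (rfl | ⟨ht, hs⟩)
      exacts [⟨Or.inr rfl, hτ⟩, ⟨Or.inl ht, hs⟩]
  · rw [add_zero]
    congr 1
    ext t
    simp only [mem_ofPred_eq, mem_preimage, mem_Iic, mem_Iio, hle]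
    constructor
    · rintro ⟨ht | rfl, hs⟩
      exacts [⟨ht, hs⟩, absurd hs hτ]
    · rintro ⟨ht, hs⟩
      exact ⟨Or.inl ht, hs⟩

/-- Inclusion–exclusion over the four corners isolates the single column `τ` and the single
row `σ`. -/
lemma isLow_iff_lowCount (hq : Function.Injective q) (σ τ : Simp K) :
    IsLow K q R τ σ ↔
      lowCount q R (q ⁻¹' Ici (q σ)) (q ⁻¹' Iic (q τ))
          + lowCount q R (q ⁻¹' Ioi (q σ)) (q ⁻¹' Iio (q τ))
        = lowCount q R (q ⁻¹' Ioi (q σ)) (q ⁻¹' Iic (q τ))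
          + lowCount q R (q ⁻¹' Ici (q σ)) (q ⁻¹' Iio (q τ)) + 1 := by
  have hlow : IsLow K q R τ σ ↔ (∃ s ∈ q ⁻¹' Ici (q σ), IsLow K q R τ s) ∧
      ¬ ∃ s ∈ q ⁻¹' Ioi (q σ), IsLow K q R τ s := by
    constructor
    · intro h
      refine ⟨⟨σ, le_refl (q σ), h⟩, ?_⟩
      rintro ⟨s, hs, hl⟩
      obtain rfl := h.unique hq hl
      exact lt_irrefl (q σ) hs
    · rintro ⟨⟨s, hs, hl⟩, hno⟩
      obtain rfl : s = σ := hq (le_antisymm (not_lt.1 fun h => hno ⟨s, h, hl⟩) hs)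
      exact hl
  rw [lowCount_preimage_Iic hq, lowCount_preimage_Iic hq, hlow]
  split_ifs with h₁ h₂ h₂ <;> simp only [h₁, h₂, not_true, not_false_iff, and_true, and_false,
    true_iff, false_iff] <;> omega

lemma isLow_iff_isRankPair (hq : Function.Injective q) {D V : Matrix (Simp K) (Simp K) (ZMod 2)}
    (hV : V.BlockTriangular q) (hVu : IsUnit V) (hR : IsReducedMatrix K q (D * V))
    (σ τ : Simp K) : IsLow K q (D * V) τ σ ↔ IsRankPair q D σ τ := by
  rw [isLow_iff_lowCount hq, IsRankPair,
    cornerRank_eq_lowCount hq hV hVu hR (isUpperSet_Ici _) (isLowerSet_Iic _),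
    cornerRank_eq_lowCount hq hV hVu hR (isUpperSet_Ioi _) (isLowerSet_Iio _),
    cornerRank_eq_lowCount hq hV hVu hR (isUpperSet_Ioi _) (isLowerSet_Iic _),
    cornerRank_eq_lowCount hq hV hVu hR (isUpperSet_Ici _) (isLowerSet_Iio _)]

theorem persPair_iff_isRankPair (hq : Function.Injective q) (σ τ : Simp K) :
    PersPair K q σ τ ↔ IsRankPair q (bdry K) σ τ := by
  constructor
  · rintro ⟨R, V, hV, hVu, rfl, hR, hlow⟩
    exact (isLow_iff_isRankPair hq (fun i j h => hV i j h) hVu hR σ τ).1 hlow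
  · intro h
    obtain ⟨V, hV, hVu, hR⟩ := exists_isReducedMatrix_mul hq (bdry K)
    exact ⟨_, V, fun a b h => hV h, hVu, rfl, hR, (isLow_iff_isRankPair hq hV hVu hR σ τ).2 h⟩

end Pairing

section Transposition

variable {ι α : Type*}

lemma isRankPair_congr {R : Type*} [Fintype ι] [DecidableEq ι] [CommRing R] [LinearOrder α]
    {q q' : ι → α} (D : Matrix ι ι R) {σ τ : ι}
    (hσ : ∀ s, (q s < q σ ↔ q' s < q' σ) ∧ (q σ < q s ↔ q' σ < q' s))
    (hτ : ∀ s, (q s < q τ ↔ q' s < q' τ) ∧ (q τ < q s ↔ q' τ < q' s)) :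
    IsRankPair q D σ τ ↔ IsRankPair q' D σ τ := by
  have hσIio : q ⁻¹' Iio (q σ) = q' ⁻¹' Iio (q' σ) := ext fun s => (hσ s).1
  have hσIoi : q ⁻¹' Ioi (q σ) = q' ⁻¹' Ioi (q' σ) := ext fun s => (hσ s).2
  have hτIio : q ⁻¹' Iio (q τ) = q' ⁻¹' Iio (q' τ) := ext fun s => (hτ s).1
  have hτIoi : q ⁻¹' Ioi (q τ) = q' ⁻¹' Ioi (q' τ) := ext fun s => (hτ s).2
  simp only [IsRankPair, ← compl_Iio, ← compl_Ioi, preimage_compl, hσIio, hσIoi, hτIio, hτIoi]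

lemma lt_iff_comp_swap_lt_of_consecutive [DecidableEq ι] {q : ι → ℕ}
    (hq : Function.Injective q) {a b ρ : ι} (hab : q b = q a + 1) (hρa : ρ ≠ a) (hρb : ρ ≠ b)
    (s : ι) :
    (q s < q ρ ↔ q (Equiv.swap a b s) < q (Equiv.swap a b ρ)) ∧
      (q ρ < q s ↔ q (Equiv.swap a b ρ) < q (Equiv.swap a b s)) := by
  have ha : q ρ ≠ q a := hq.ne hρa
  have hb : q ρ ≠ q b := hq.ne hρb
  rw [Equiv.swap_apply_of_ne_of_ne hρa hρb, Equiv.swap_apply_def]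
  split_ifs with hsa hsb
  · subst hsa; omega
  · subst hsb; omega
  · exact ⟨Iff.rfl, Iff.rfl⟩

end Transposition

theorem transposition_stability_general (K : Finset (Finset ℕ))
    (pos : Simp K → ℕ) (hpos : IsSimpFiltration K pos)
    (σ₁ σ₂ : Simp K)
    (hconsec : pos σ₂ = pos σ₁ + 1)
    (pos' : Simp K → ℕ)
    (hpos' : ∀ s : Simp K,
      pos' s = if s = σ₁ then pos σ₂ else if s = σ₂ then pos σ₁ else pos s) :
    ∀ σ τ : Simp K, σ ≠ σ₁ → σ ≠ σ₂ → τ ≠ σ₁ → τ ≠ σ₂ →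
      (PersPair K pos σ τ ↔ PersPair K pos' σ τ) := by
  intro σ τ hσ₁ hσ₂ hτ₁ hτ₂
  obtain rfl : pos' = pos ∘ Equiv.swap σ₁ σ₂ := funext fun s => by
    rw [hpos' s, Function.comp_apply, Equiv.swap_apply_def]
    split_ifs <;> rfl
  rw [persPair_iff_isRankPair hpos.1, persPair_iff_isRankPair (hpos.1.comp (Equiv.injective _))]
  exact isRankPair_congr (bdry K) (lt_iff_comp_swap_lt_of_consecutive hpos.1 hconsec hσ₁ hσ₂)
    (lt_iff_comp_swap_lt_of_consecutive hpos.1 hconsec hτ₁ hτ₂)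

/-- Transposition stability: transposing two consecutive simplices `σ₁, σ₂` of
a filtration (neither a face of the other) changes only the persistence pairs
involving `σ₁` or `σ₂`; every pair with neither endpoint in `{σ₁, σ₂}` is the
same before and after. -/
theorem transposition_stability (K : Finset (Finset ℕ)) (hK : IsComplex K)
    (pos : Simp K → ℕ) (hpos : IsSimpFiltration K pos)
    (σ₁ σ₂ : Simp K) (hne : σ₁ ≠ σ₂)
    (hconsec : pos σ₂ = pos σ₁ + 1)
    (hface₁ : ¬ σ₁.1 ⊆ σ₂.1) (hface₂ : ¬ σ₂.1 ⊆ σ₁.1)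
    (pos' : Simp K → ℕ)
    (hpos' : ∀ s : Simp K,
      pos' s = if s = σ₁ then pos σ₂ else if s = σ₂ then pos σ₁ else pos s) :
    ∀ σ τ : Simp K, σ ≠ σ₁ → σ ≠ σ₂ → τ ≠ σ₁ → τ ≠ σ₂ →
      (PersPair K pos σ τ ↔ PersPair K pos' σ τ) :=
  transposition_stability_general K pos hpos σ₁ σ₂ hconsec pos' hpos'
end

section
/- Let K be a finite simplicial complex with a filtration, let X be a set of simplices occupying contiguous positions in the filtration order, and let a second filtration be obtained from the first by reordering only the simplices within X (keeping all other simplices fixed, and the set of positions of X fixed). Then every persistence pair with both endpoints outside X is the same in both filtrations. -/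
open Matrix

/-!
The low of column `τ` in a reduced decomposition `R = ∂ V` does not depend on the decomposition:
it is `σ` exactly when some combination of `∂ τ` with earlier columns is supported on the rows up
to `σ`, and no such combination is supported on the rows strictly before `σ`. This criterion only
asks which simplices come before `σ` and before `τ`, and a reordering inside a contiguous block
containing neither `σ` nor `τ` does not change the answer. Reduced decompositions exist for every
filtration: a decomposition minimising the sum of the positions of the lows is reduced, since two
columns with the same low could be added to lower that sum.
-/

namespace Matrix.BlockTriangular

variable {n α R : Type*} [Fintype n] [LinearOrder α] [NonUnitalNonAssocSemiring R]
  {B C : Matrix n n R} {b : n → α}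

theorem mulVec_apply_of_support_subset (hB : B.BlockTriangular b) (hb : Function.Injective b)
    {v : n → R} {i : n} (hv : v.support ⊆ {c | b c ≤ b i}) : (B *ᵥ v) i = B i i * v i := by
  rw [mulVec, dotProduct]
  refine Finset.sum_eq_single i (fun c _ hci => ?_) (by simp)
  by_cases hvc : v c = 0
  · rw [hvc, mul_zero]
  · rw [hB (lt_of_le_of_ne (hv hvc) (hb.ne hci)), zero_mul]

theorem mul_apply_self (hB : B.BlockTriangular b) (hC : C.BlockTriangular b)
    (hb : Function.Injective b) (i : n) : (B * C) i i = B i i * C i i := by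
  rw [mul_apply]
  refine Finset.sum_eq_single i (fun c _ hci => ?_) (by simp)
  rcases lt_or_gt_of_ne (hb.ne hci) with h | h
  · rw [hB h, zero_mul]
  · rw [hC h, mul_zero]

theorem inv_apply_self_mul_apply_self {R : Type*} [CommRing R] [DecidableEq n]
    {V : Matrix n n R} (hV : V.BlockTriangular b) (hVu : IsUnit V) (hb : Function.Injective b)
    (i : n) : V⁻¹ i i * V i i = 1 := by
  have := hVu.invertible
  rw [← (blockTriangular_inv_of_blockTriangular hV).mul_apply_self hV hb,
    nonsing_inv_mul _ ((isUnit_iff_isUnit_det V).1 hVu), one_apply_eq]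

end Matrix.BlockTriangular

theorem le_iff_le_and_lt_iff_lt_of_reorder {ι : Type*} {pos pos' : ι → ℕ} {X : Set ι}
    {a b : ℕ} (hcontig : ∀ s, s ∈ X ↔ a ≤ pos s ∧ pos s ≤ b)
    (hout : ∀ s, s ∉ X → pos' s = pos s) (hin : ∀ s ∈ X, a ≤ pos' s ∧ pos' s ≤ b)
    {s : ι} (hs : s ∉ X) (c : ι) :
    (pos' c ≤ pos' s ↔ pos c ≤ pos s) ∧ (pos' c < pos' s ↔ pos c < pos s) := by
  have hs' := (hcontig s).not.1 hs
  rw [hout s hs]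
  by_cases hc : c ∈ X
  · have := (hcontig c).1 hc
    have := hin c hc
    omega
  · rw [hout c hc]
    exact ⟨Iff.rfl, Iff.rfl⟩

namespace Persistence

variable {K : Finset (Finset ℕ)} {pos : Simp K → ℕ}

local notation "𝕄[" K "]" => Matrix (Simp K) (Simp K) (ZMod 2)

def IsReduced (pos : Simp K → ℕ) (R : 𝕄[K]) : Prop :=
  ∀ τ₁ τ₂ s : Simp K, IsLow K pos R τ₁ s → IsLow K pos R τ₂ s → τ₁ = τ₂

def ColumnReducesInto (D : 𝕄[K]) (C L : Set (Simp K)) (τ : Simp K) : Prop :=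
  ∃ v : Simp K → ZMod 2, v τ ≠ 0 ∧ v.support ⊆ C ∧ (D *ᵥ v).support ⊆ L

theorem ColumnReducesInto.mono {D : 𝕄[K]} {C L L' : Set (Simp K)} {τ : Simp K}
    (h : ColumnReducesInto D C L τ) (hL : L ⊆ L') : ColumnReducesInto D C L' τ :=
  let ⟨v, hvτ, hvC, hvL⟩ := h
  ⟨v, hvτ, hvC, hvL.trans hL⟩

def IsPivot (pos : Simp K → ℕ) (D : 𝕄[K]) (σ τ : Simp K) : Prop :=
  ColumnReducesInto D {c | pos c ≤ pos τ} {ρ | pos ρ ≤ pos σ} τ ∧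
    ¬ ColumnReducesInto D {c | pos c ≤ pos τ} {ρ | pos ρ < pos σ} τ

theorem IsPivot.unique (hinj : Function.Injective pos) {D : 𝕄[K]} {σ σ' τ : Simp K}
    (h : IsPivot pos D σ τ) (h' : IsPivot pos D σ' τ) : σ = σ' := by
  refine hinj (le_antisymm (not_lt.1 fun hlt => ?_) (not_lt.1 fun hlt => ?_))
  · exact h.2 (h'.1.mono fun ρ hρ => lt_of_le_of_lt hρ hlt)
  · exact h'.2 (h.1.mono fun ρ hρ => lt_of_le_of_lt hρ hlt)

theorem exists_isLow {R : 𝕄[K]} {τ : Simp K} (h : ∃ ρ, R ρ τ ≠ 0) : ∃ σ, IsLow K pos R τ σ := by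
  obtain ⟨ρ, hρ⟩ := h
  obtain ⟨σ, hσ, hmax⟩ := (Finset.univ.filter fun ρ => R ρ τ ≠ 0).exists_max_image pos
    ⟨ρ, Finset.mem_filter.2 ⟨Finset.mem_univ _, hρ⟩⟩
  exact ⟨σ, (Finset.mem_filter.1 hσ).2,
    fun σ' hσ' => hmax σ' (Finset.mem_filter.2 ⟨Finset.mem_univ _, hσ'⟩)⟩

theorem _root_.IsLow.eq_zero_of_lt {R : 𝕄[K]} {σ τ ρ : Simp K} (h : IsLow K pos R τ σ)
    (hρ : pos σ < pos ρ) : R ρ τ = 0 :=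
  not_not.1 fun hne => (h.2 ρ hne).not_gt hρ

/-- In a reduced matrix the lows of the columns occurring in a combination cannot cancel. -/
theorem exists_le_mulVec_ne_zero {R : 𝕄[K]} (hR : IsReduced pos R) {σ τ : Simp K}
    (hlow : IsLow K pos R τ σ) {u : Simp K → ZMod 2} (hu : u τ ≠ 0) :
    ∃ ρ, pos σ ≤ pos ρ ∧ (R *ᵥ u) ρ ≠ 0 := by
  classical
  set S := Finset.univ.filter fun ρ => ∃ c, u c ≠ 0 ∧ R ρ c ≠ 0
  have hσS : σ ∈ S := Finset.mem_filter.2 ⟨Finset.mem_univ _, τ, hu, hlow.1⟩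
  obtain ⟨ρ, hρS, hmax⟩ := S.exists_max_image pos ⟨σ, hσS⟩
  obtain ⟨c₀, hc₀u, hc₀R⟩ := (Finset.mem_filter.1 hρS).2
  have hlowρ : ∀ c, u c ≠ 0 → R ρ c ≠ 0 → IsLow K pos R c ρ := fun c hcu hcR =>
    ⟨hcR, fun ρ' hρ' => hmax ρ' (Finset.mem_filter.2 ⟨Finset.mem_univ _, c, hcu, hρ'⟩)⟩
  refine ⟨ρ, hmax σ hσS, ?_⟩
  have hsingle : (R *ᵥ u) ρ = R ρ c₀ * u c₀ := by
    refine Finset.sum_eq_single c₀ (fun c _ hc => ?_) (by simp)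
    by_contra hne
    exact hc (hR c c₀ ρ (hlowρ c (right_ne_zero_of_mul hne) (left_ne_zero_of_mul hne))
      (hlowρ c₀ hc₀u hc₀R))
  rw [hsingle]
  exact mul_ne_zero hc₀R hc₀u

section Decomposition

variable (hinj : Function.Injective pos) {D R V : 𝕄[K]} (hV : V.BlockTriangular pos)
  (hVu : IsUnit V) (hRDV : R = D * V)
include hinj hV hVu hRDV

theorem columnReducesInto_of_column_support {τ : Simp K} {L : Set (Simp K)}
    (hL : ∀ ρ, R ρ τ ≠ 0 → ρ ∈ L) : ColumnReducesInto D {c | pos c ≤ pos τ} L τ := by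
  refine ⟨fun c => V c τ,
    right_ne_zero_of_mul_eq_one (hV.inv_apply_self_mul_apply_self hVu hinj τ),
    fun c hc => not_lt.1 fun h => hc (hV h), fun ρ hρ => hL ρ ?_⟩
  rwa [hRDV]

theorem isPivot_of_isLow (hR : IsReduced pos R) {σ τ : Simp K} (hlow : IsLow K pos R τ σ) :
    IsPivot pos D σ τ := by
  refine ⟨columnReducesInto_of_column_support hinj hV hVu hRDV hlow.2, ?_⟩
  rintro ⟨w, hwτ, hwC, hwL⟩
  have := hVu.invertible
  have huτ : (V⁻¹ *ᵥ w) τ ≠ 0 := by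
    rw [(blockTriangular_inv_of_blockTriangular hV).mulVec_apply_of_support_subset hinj hwC]
    exact mul_ne_zero
      (left_ne_zero_of_mul_eq_one (hV.inv_apply_self_mul_apply_self hVu hinj τ)) hwτ
  have hRu : R *ᵥ (V⁻¹ *ᵥ w) = D *ᵥ w := by
    rw [hRDV, mulVec_mulVec, Matrix.mul_assoc,
      mul_nonsing_inv _ ((isUnit_iff_isUnit_det V).1 hVu), Matrix.mul_one]
  obtain ⟨ρ, hσρ, hρ⟩ := exists_le_mulVec_ne_zero hR hlow huτ
  rw [hRu] at hρ
  exact absurd hσρ (not_le.2 (hwL hρ))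

theorem isLow_iff_isPivot (hR : IsReduced pos R) (σ τ : Simp K) :
    IsLow K pos R τ σ ↔ IsPivot pos D σ τ := by
  refine ⟨isPivot_of_isLow hinj hV hVu hRDV hR, fun hpiv => ?_⟩
  by_cases hτ : ∀ ρ, R ρ τ = 0
  · exact absurd (columnReducesInto_of_column_support hinj hV hVu hRDV
      fun ρ hρ => absurd (hτ ρ) hρ) hpiv.2
  · obtain ⟨σ₁, hσ₁⟩ := exists_isLow (not_forall.1 hτ)
    rwa [hpiv.unique hinj (isPivot_of_isLow hinj hV hVu hRDV hR hσ₁)]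

end Decomposition

/-- One more than the position of the low of column `c`, and `0` for a zero column. -/
def lowIndex (pos : Simp K → ℕ) (R : 𝕄[K]) (c : Simp K) : ℕ :=
  (Finset.univ.filter fun ρ => R ρ c ≠ 0).sup fun ρ => pos ρ + 1

theorem lowIndex_le_iff {R : 𝕄[K]} {c : Simp K} {n : ℕ} :
    lowIndex pos R c ≤ n ↔ ∀ ρ, R ρ c ≠ 0 → pos ρ < n := by
  simp [lowIndex, Finset.sup_le_iff]

def totalLow (pos : Simp K → ℕ) (R : 𝕄[K]) : ℕ :=
  ∑ c, lowIndex pos R c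

theorem lowIndex_mul_transvection_lt (hinj : Function.Injective pos) {R : 𝕄[K]}
    {τ₁ τ₂ s : Simp K} (h₁ : IsLow K pos R τ₁ s) (h₂ : IsLow K pos R τ₂ s) :
    lowIndex pos (R * transvection τ₁ τ₂ 1) τ₂ < lowIndex pos R τ₂ := by
  have hnew : lowIndex pos (R * transvection τ₁ τ₂ 1) τ₂ ≤ pos s := by
    refine lowIndex_le_iff.2 fun ρ hρ => ?_
    rw [mul_transvection_apply_same, one_mul] at hρ
    rcases lt_trichotomy (pos ρ) (pos s) with h | h | h
    · exact h
    · have hcancel : ∀ x y : ZMod 2, x ≠ 0 → y ≠ 0 → x + y = 0 := by decide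
      rw [hinj h] at hρ
      exact absurd (hcancel _ _ h₂.1 h₁.1) hρ
    · rw [h₁.eq_zero_of_lt h, h₂.eq_zero_of_lt h, add_zero] at hρ
      exact absurd rfl hρ
  have hold : ¬ lowIndex pos R τ₂ ≤ pos s := fun hle =>
    lt_irrefl _ (lowIndex_le_iff.1 hle s h₂.1)
  omega

theorem totalLow_mul_transvection_lt (hinj : Function.Injective pos) {R : 𝕄[K]}
    {τ₁ τ₂ s : Simp K} (h₁ : IsLow K pos R τ₁ s) (h₂ : IsLow K pos R τ₂ s) :
    totalLow pos (R * transvection τ₁ τ₂ 1) < totalLow pos R := by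
  refine Finset.sum_lt_sum (fun c _ => ?_)
    ⟨τ₂, Finset.mem_univ _, lowIndex_mul_transvection_lt hinj h₁ h₂⟩
  by_cases hc : c = τ₂
  · subst hc
    exact (lowIndex_mul_transvection_lt hinj h₁ h₂).le
  · simp only [lowIndex, mul_transvection_apply_of_ne _ _ _ _ hc, le_refl]

theorem exists_isReduced (hinj : Function.Injective pos) (D : 𝕄[K]) :
    ∃ V : 𝕄[K], V.BlockTriangular pos ∧ IsUnit V ∧ IsReduced pos (D * V) := by
  obtain ⟨V, ⟨hV, hVu⟩, hmin⟩ :=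
    Set.exists_min_image {V : 𝕄[K] | V.BlockTriangular pos ∧ IsUnit V}
      (fun V => totalLow pos (D * V)) (Set.toFinite _) ⟨1, blockTriangular_one, isUnit_one⟩
  have hnot_lt : ∀ τ₁ τ₂ s, IsLow K pos (D * V) τ₁ s → IsLow K pos (D * V) τ₂ s → τ₁ ≠ τ₂ →
      ¬ pos τ₁ < pos τ₂ := by
    intro τ₁ τ₂ s h₁ h₂ hne hlt
    have hE : IsUnit (transvection τ₁ τ₂ (1 : ZMod 2)) := by
      rw [isUnit_iff_isUnit_det, det_transvection_of_ne _ _ hne]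
      exact isUnit_one
    refine (hmin (V * transvection τ₁ τ₂ 1)
      ⟨hV.mul (blockTriangular_transvection hlt.le 1), hVu.mul hE⟩).not_gt ?_
    rw [← Matrix.mul_assoc]
    exact totalLow_mul_transvection_lt hinj h₁ h₂
  refine ⟨V, hV, hVu, fun τ₁ τ₂ s h₁ h₂ => ?_⟩
  by_contra hne
  exact (lt_or_gt_of_ne (hinj.ne hne)).elim (hnot_lt _ _ _ h₁ h₂ hne)
    (hnot_lt _ _ _ h₂ h₁ (Ne.symm hne))

theorem persPair_iff_isPivot (hinj : Function.Injective pos) (σ τ : Simp K) :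
    PersPair K pos σ τ ↔ IsPivot pos (bdry K) σ τ := by
  constructor
  · rintro ⟨R, V, hV, hVu, hRDV, hR, hlow⟩
    exact (isLow_iff_isPivot hinj (fun _ _ h => hV _ _ h) hVu hRDV hR σ τ).1 hlow
  · intro hpiv
    obtain ⟨V, hV, hVu, hR⟩ := exists_isReduced hinj (bdry K)
    exact ⟨_, V, fun _ _ h => hV h, hVu, rfl, hR, (isLow_iff_isPivot hinj hV hVu rfl hR σ τ).2 hpiv⟩

theorem isPivot_congr {pos' : Simp K → ℕ} {D : 𝕄[K]} {σ τ : Simp K}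
    (hσ : ∀ c, (pos' c ≤ pos' σ ↔ pos c ≤ pos σ) ∧ (pos' c < pos' σ ↔ pos c < pos σ))
    (hτ : ∀ c, pos' c ≤ pos' τ ↔ pos c ≤ pos τ) :
    IsPivot pos' D σ τ ↔ IsPivot pos D σ τ := by
  simp only [IsPivot, fun c => (hσ c).1, fun c => (hσ c).2, hτ]

end Persistence

theorem reordering_stability_general (K : Finset (Finset ℕ))
    (pos : Simp K → ℕ) (hpos : IsSimpFiltration K pos)
    (X : Set (Simp K)) (a b : ℕ)
    (hcontig : ∀ s : Simp K, s ∈ X ↔ a ≤ pos s ∧ pos s ≤ b)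
    (pos' : Simp K → ℕ) (hpos' : IsSimpFiltration K pos')
    (hout : ∀ s : Simp K, s ∉ X → pos' s = pos s)
    (hin : ∀ s ∈ X, a ≤ pos' s ∧ pos' s ≤ b) :
    ∀ σ τ : Simp K, σ ∉ X → τ ∉ X →
      (PersPair K pos σ τ ↔ PersPair K pos' σ τ) := by
  intro σ τ hσ hτ
  rw [Persistence.persPair_iff_isPivot hpos.1, Persistence.persPair_iff_isPivot hpos'.1]
  exact (Persistence.isPivot_congr (le_iff_le_and_lt_iff_lt_of_reorder hcontig hout hin hσ)
    fun c => (le_iff_le_and_lt_iff_lt_of_reorder hcontig hout hin hτ c).1).symm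

/-- Reordering stability: if `X` is a contiguous set of simplices in the
filtration and a second filtration reorders only the simplices of `X` (keeping
all other simplices and the set of positions occupied by `X` fixed), then every
persistence pair with both endpoints outside `X` is the same in both
filtrations. -/
theorem reordering_stability (K : Finset (Finset ℕ)) (hK : IsComplex K)
    (pos : Simp K → ℕ) (hpos : IsSimpFiltration K pos)
    (X : Set (Simp K)) (a b : ℕ)
    (hcontig : ∀ s : Simp K, s ∈ X ↔ a ≤ pos s ∧ pos s ≤ b)
    (pos' : Simp K → ℕ) (hpos' : IsSimpFiltration K pos')
    (hout : ∀ s : Simp K, s ∉ X → pos' s = pos s)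
    (hin : ∀ s ∈ X, a ≤ pos' s ∧ pos' s ≤ b) :
    ∀ σ τ : Simp K, σ ∉ X → τ ∉ X →
      (PersPair K pos σ τ ↔ PersPair K pos' σ τ) :=
  reordering_stability_general K pos hpos X a b hcontig pos' hpos' hout hin
end

section
/- Let U be an invertible upper-triangular n × n matrix over a field, and let W be the product of elementary row operations that add multiples of row k to rows above it so as to zero out the entries U[i, k] for i < k in a contiguous range. Then D = R U = (R W⁻¹)(W U), where W U is still invertible upper-triangular and has zero entries in column k above the diagonal within the range, and R W⁻¹ differs from R only by adding multiples of columns other than k to column k. Consequently, if every column c ≠ k of R involved satisfies low_R(c) ≤ s for a fixed row s and low_R(k) > s, then low_{R W⁻¹}(k) = low_R(k). -/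
open Matrix

variable {F : Type*} [Field F] [DecidableEq F] {m n : ℕ}

/-- The product of the elementary row operations `Rᵢ ← Rᵢ + αᵢ·R_k` for the
rows `i` in the contiguous range `a ≤ i < k`. -/
def rowOpsMat (k : Fin n) (a : ℕ) (α : Fin n → F) : Matrix (Fin n) (Fin n) F :=
  fun i j => if i = j then 1
    else if j = k ∧ a ≤ i.val ∧ i.val < k.val then α i else 0



/-- The off-diagonal part of `rowOpsMat`. -/
def Eoff (k : Fin n) (a : ℕ) (α : Fin n → F) : Matrix (Fin n) (Fin n) F :=
  fun i j => if j = k ∧ a ≤ i.val ∧ i.val < k.val then α i else 0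

lemma rowOpsMat_eq (k : Fin n) (a : ℕ) (α : Fin n → F) :
    rowOpsMat k a α = 1 + Eoff k a α := by
  funext i j
  simp only [rowOpsMat, Eoff, Matrix.add_apply, Matrix.one_apply]
  by_cases h : i = j
  · subst h
    simp only [if_pos rfl]
    rcases eq_or_ne i k with rfl | hik
    · simp
    · simp [hik]
  · simp [h]

lemma Eoff_mul_Eoff (k : Fin n) (a : ℕ) (α β : Fin n → F) :
    Eoff k a α * Eoff k a β = 0 := by
  funext i j
  simp only [Matrix.mul_apply, Matrix.zero_apply]
  apply Finset.sum_eq_zero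
  intro l _
  simp only [Eoff]
  rcases eq_or_ne l k with rfl | hlk
  · simp
  · simp [hlk]

lemma Eoff_add (k : Fin n) (a : ℕ) (α β : Fin n → F) :
    Eoff k a α + Eoff k a β = Eoff k a (fun i => α i + β i) := by
  funext i j
  simp only [Eoff, Matrix.add_apply]
  split <;> simp

lemma Eoff_zero (k : Fin n) (a : ℕ) :
    Eoff (F := F) k a (fun _ => 0) = 0 := by
  funext i j
  simp only [Eoff, Matrix.zero_apply]
  split <;> rfl

lemma rowOpsMat_mul (k : Fin n) (a : ℕ) (α β : Fin n → F) :
    rowOpsMat k a α * rowOpsMat k a β = rowOpsMat k a (fun i => α i + β i) := by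
  rw [rowOpsMat_eq, rowOpsMat_eq, rowOpsMat_eq]
  simp only [add_mul, mul_add, one_mul, mul_one, Eoff_mul_Eoff, add_zero]
  rw [add_assoc, Eoff_add]

lemma rowOpsMat_inv (k : Fin n) (a : ℕ) (α : Fin n → F) :
    rowOpsMat k a α * rowOpsMat k a (fun i => -α i) = 1 := by
  rw [rowOpsMat_mul]
  simp only [add_neg_cancel]
  rw [rowOpsMat_eq, Eoff_zero, add_zero]

lemma Eoff_mul_apply (k : Fin n) (a : ℕ) (α : Fin n → F)
    (U : Matrix (Fin n) (Fin n) F) (i j : Fin n) :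
    (Eoff k a α * U) i j =
      if a ≤ i.val ∧ i.val < k.val then α i * U k j else 0 := by
  rw [Matrix.mul_apply, Finset.sum_eq_single k]
  · simp only [Eoff]
    split <;> split <;> simp_all
  · intro l _ hlk
    simp [Eoff, hlk]
  · simp

lemma mul_Eoff_apply (k : Fin n) (a : ℕ) (β : Fin n → F)
    (R : Matrix (Fin m) (Fin n) F) (r : Fin m) (j : Fin n) :
    (R * Eoff k a β) r j =
      if j = k then
        ∑ l ∈ Finset.univ.filter (fun l : Fin n => a ≤ l.val ∧ l.val < k.val),
          R r l * β l
      else 0 := by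
  rw [Matrix.mul_apply]
  split
  · next hj =>
    rw [hj, Finset.sum_filter]
    apply Finset.sum_congr rfl
    intro l _
    by_cases hc : a ≤ l.val ∧ l.val < k.val
    · rw [if_pos hc]; simp [Eoff, hc]
    · rw [if_neg hc]
      have hz : Eoff k a β l k = 0 := by
        simp only [Eoff]
        rw [if_neg]
        intro h
        exact hc ⟨h.2.1, h.2.2⟩
      rw [hz, mul_zero]
  · next hj =>
    apply Finset.sum_eq_zero
    intro l _
    simp [Eoff, hj]

lemma row_zero_of_lowNat_le {R : Matrix (Fin m) (Fin n) F} {c : Fin n} {s : ℕ}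
    (h : lowNat R c ≤ s) {r : Fin m} (hr : s < r.val + 1) : R r c = 0 := by
  by_contra hne
  have hmem : r ∈ Finset.univ.filter (fun i : Fin m => R i c ≠ 0) :=
    Finset.mem_filter.mpr ⟨Finset.mem_univ r, hne⟩
  have h2 : r.val + 1 ≤ lowNat R c :=
    Finset.le_sup (f := fun i : Fin m => i.val + 1) hmem
  omega

lemma lowNat_eq_of_agree {R R' : Matrix (Fin m) (Fin n) F} {k : Fin n} {s : ℕ}
    (hs : s < lowNat R k) (hagree : ∀ r : Fin m, s < r.val + 1 → R' r k = R r k) :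
    lowNat R' k = lowNat R k := by
  have hne : (Finset.univ.filter fun i : Fin m => R i k ≠ 0).Nonempty := by
    by_contra h
    rw [Finset.not_nonempty_iff_eq_empty] at h
    unfold lowNat at hs
    rw [h] at hs
    simp at hs
  obtain ⟨r0, hr0mem, hr0⟩ := Finset.exists_mem_eq_sup _ hne
    (fun i : Fin m => i.val + 1)
  have hr0ne : R r0 k ≠ 0 := (Finset.mem_filter.mp hr0mem).2
  have hsup : lowNat R k = r0.val + 1 := hr0
  apply le_antisymm
  · apply Finset.sup_le
    intro r hr
    have hrne : R' r k ≠ 0 := (Finset.mem_filter.mp hr).2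
    by_cases hcase : s < r.val + 1
    · have : R r k ≠ 0 := by rw [← hagree r hcase]; exact hrne
      exact Finset.le_sup (f := fun i : Fin m => i.val + 1)
        (Finset.mem_filter.mpr ⟨Finset.mem_univ r, this⟩)
    · omega
  · rw [hsup]
    have hs0 : s < r0.val + 1 := by omega
    have : R' r0 k ≠ 0 := by rw [hagree r0 hs0]; exact hr0ne
    exact Finset.le_sup (f := fun i : Fin m => i.val + 1)
      (Finset.mem_filter.mpr ⟨Finset.mem_univ r0, this⟩)

/-- The matrix-algebra step in the proof of the Increase Death theorem:
zeroing out the entries of column `k` of an invertible upper-triangular `U`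
above the diagonal (in a contiguous range) by the row operations `W` gives
`R U = (R W⁻¹)(W U)` with `W U` still invertible upper-triangular and zero in
column `k` within the range, while `R W⁻¹` differs from `R` only by adding
multiples of other columns to column `k`; consequently, if every involved
column `c ≠ k` has `low_R(c) ≤ s` while `low_R(k) > s`, then the low of
column `k` is unchanged. -/
theorem zero_out_column_step (R : Matrix (Fin m) (Fin n) F)
    (U : Matrix (Fin n) (Fin n) F) (hU : UpperTriFin U) (hUunit : IsUnit U)
    (k : Fin n) (a : ℕ) (α : Fin n → F)
    (hα : ∀ i : Fin n, a ≤ i.val → i.val < k.val → U i k + α i * U k k = 0)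
    (s : ℕ) :
    rowOpsMat k a α * rowOpsMat k a (fun i => -α i) = 1 ∧
    rowOpsMat k a (fun i => -α i) * rowOpsMat k a α = 1 ∧
    R * U = (R * rowOpsMat k a (fun i => -α i)) * (rowOpsMat k a α * U) ∧
    UpperTriFin (rowOpsMat k a α * U) ∧
    (∀ i : Fin n, a ≤ i.val → i.val < k.val → (rowOpsMat k a α * U) i k = 0) ∧
    (∀ j : Fin n, j ≠ k → ∀ r : Fin m,
      (R * rowOpsMat k a (fun i => -α i)) r j = R r j) ∧
    ((∀ c : Fin n, c ≠ k → α c ≠ 0 → lowNat R c ≤ s) → s < lowNat R k →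
      lowNat (R * rowOpsMat k a (fun i => -α i)) k = lowNat R k) := by
  have hWW' : rowOpsMat k a α * rowOpsMat k a (fun i => -α i) = 1 :=
    rowOpsMat_inv k a α
  have hW'W : rowOpsMat k a (fun i => -α i) * rowOpsMat k a α = 1 := by
    have := rowOpsMat_inv k a (fun i => -α i)
    simpa using this
  refine ⟨hWW', hW'W, ?_, ?_, ?_, ?_, ?_⟩
  · rw [Matrix.mul_assoc, ← Matrix.mul_assoc (rowOpsMat k a (fun i => -α i)),
      hW'W, Matrix.one_mul]
  · intro i j hji
    rw [rowOpsMat_eq, add_mul, Matrix.one_mul, Matrix.add_apply,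
      Eoff_mul_apply, hU i j hji]
    split
    · next h =>
      have : j < k := lt_trans hji (Fin.lt_def.mpr h.2)
      rw [hU k j this, mul_zero, zero_add]
    · simp
  · intro i hai hik
    rw [rowOpsMat_eq, add_mul, Matrix.one_mul, Matrix.add_apply,
      Eoff_mul_apply, if_pos ⟨hai, hik⟩]
    exact hα i hai hik
  · intro j hj r
    rw [rowOpsMat_eq, Matrix.mul_add, Matrix.mul_one, Matrix.add_apply,
      mul_Eoff_apply, if_neg hj, add_zero]
  · intro hcols hlow
    apply lowNat_eq_of_agree hlow
    intro r hr
    rw [rowOpsMat_eq, Matrix.mul_add, Matrix.mul_one, Matrix.add_apply,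
      mul_Eoff_apply, if_pos rfl]
    have : ∀ l ∈ Finset.univ.filter
        (fun l : Fin n => a ≤ l.val ∧ l.val < k.val), R r l * (-α l) = 0 := by
      intro l hl
      obtain ⟨-, -, hlk⟩ := Finset.mem_filter.mp hl
      have hlne : l ≠ k := fun h => by subst h; omega
      by_cases hαl : α l = 0
      · simp [hαl]
      · rw [row_zero_of_lowNat_le (hcols l hlne hαl) hr, zero_mul]
    rw [Finset.sum_eq_zero this, add_zero]
end

section
/- Let D be an m × n matrix over a field. Among all decompositions R = DV with V invertible upper-triangular and R reduced, the set of indices j with column j of R equal to zero is the same; equivalently, whether a simplex is positive (its column reduces to zero) is independent of the reduction. -/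
open Matrix

variable {F : Type*} [Field F] [DecidableEq F] {m n : ℕ}

/-- `R = D * V` is a reduced decomposition of `D`. -/
def ReducedDecomp (D R : Matrix (Fin m) (Fin n) F)
    (V : Matrix (Fin n) (Fin n) F) : Prop :=
  ReducedMat R ∧ UpperTriFin V ∧ IsUnit V ∧ R = D * V

lemma le_lowNat_of_ne (R : Matrix (Fin m) (Fin n) F) (k : Fin n) (i : Fin m)
    (h : R i k ≠ 0) : i.val + 1 ≤ lowNat R k :=
  Finset.le_sup (f := fun i : Fin m => i.val + 1)
    (Finset.mem_filter.2 ⟨Finset.mem_univ _, h⟩)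

lemma entry_zero_of_lowNat_le {R : Matrix (Fin m) (Fin n) F} {k : Fin n} {i : Fin m}
    (h : lowNat R k ≤ i.val) : R i k = 0 := by
  by_contra hne
  have := le_lowNat_of_ne R k i hne
  omega

lemma exists_low_row {R : Matrix (Fin m) (Fin n) F} {k : Fin n}
    (h : ¬ ∀ i, R i k = 0) :
    ∃ i0 : Fin m, i0.val + 1 = lowNat R k ∧ R i0 k ≠ 0 := by
  push_neg at h
  obtain ⟨i, hi⟩ := h
  have hne : (Finset.univ.filter fun i : Fin m => R i k ≠ 0).Nonempty :=
    ⟨i, Finset.mem_filter.2 ⟨Finset.mem_univ _, hi⟩⟩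
  obtain ⟨i0, hi0, hsup⟩ := Finset.exists_mem_eq_sup _ hne (fun i : Fin m => i.val + 1)
  exact ⟨i0, hsup.symm, (Finset.mem_filter.1 hi0).2⟩

/-- Cancellation in a reduced matrix: if a linear combination of the columns of a
reduced matrix vanishes, then every column with a nonzero coefficient is zero. -/
lemma reduced_cancel {R : Matrix (Fin m) (Fin n) F} (hR : ReducedMat R)
    (c : Fin n → F) (hc : ∀ i, (∑ k, c k * R i k) = 0)
    {j : Fin n} (hcj : c j ≠ 0) (hcol : ¬ ∀ i, R i j = 0) : False := by
  classical
  set T := Finset.univ.filter (fun k : Fin n => c k ≠ 0 ∧ ¬ ∀ i, R i k = 0) with hT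
  have hTne : T.Nonempty := ⟨j, Finset.mem_filter.2 ⟨Finset.mem_univ _, hcj, hcol⟩⟩
  obtain ⟨k0, hk0T, hmax⟩ := T.exists_max_image (lowNat R) hTne
  obtain ⟨hck0, hcolk0⟩ := (Finset.mem_filter.1 hk0T).2
  obtain ⟨i0, hi0low, hi0ne⟩ := exists_low_row hcolk0
  have hsum := hc i0
  have hsingle : ∑ k, c k * R i0 k = c k0 * R i0 k0 := by
    rw [Finset.sum_eq_single k0]
    · intro k _ hkne
      by_cases hck : c k = 0
      · simp [hck]
      by_cases hcolk : ∀ i, R i k = 0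
      · simp [hcolk i0]
      have hkT : k ∈ T := Finset.mem_filter.2 ⟨Finset.mem_univ _, hck, hcolk⟩
      have hle : lowNat R k ≤ lowNat R k0 := hmax k hkT
      have hne0 : lowNat R k ≠ lowNat R k0 := by
        intro he
        obtain ⟨i1, hi1, hi1ne⟩ := exists_low_row hcolk
        exact hkne (hR k k0 he (by omega))
      have : lowNat R k ≤ i0.val := by omega
      simp [entry_zero_of_lowNat_le this]
    · intro h; exact absurd (Finset.mem_univ k0) h
  rw [hsum] at hsingle
  exact hi0ne (by
    rcases mul_eq_zero.1 hsingle.symm with h | h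
    · exact absurd h hck0
    · exact h)

/-- One direction of the independence statement. -/
lemma zero_col_of_zero_col (D R R' : Matrix (Fin m) (Fin n) F)
    (V V' : Matrix (Fin n) (Fin n) F)
    (h : ReducedDecomp D R V) (h' : ReducedDecomp D R' V') (j : Fin n)
    (hz : ∀ i : Fin m, R' i j = 0) : ∀ i : Fin m, R i j = 0 := by
  classical
  obtain ⟨hRred, hVtri, hVunit, hRD⟩ := h
  obtain ⟨hR'red, hV'tri, hV'unit, hR'D⟩ := h'
  have hVdet : IsUnit V.det := (Matrix.isUnit_iff_isUnit_det V).1 hVunit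
  -- W = V⁻¹ * V'
  set W := V⁻¹ * V' with hW
  have hRW : R' = R * W := by
    rw [hR'D, hRD, hW, Matrix.mul_assoc, ← Matrix.mul_assoc V V⁻¹ V',
      Matrix.mul_nonsing_inv V hVdet, Matrix.one_mul]
  -- V⁻¹ is upper triangular
  have hVbt : V.BlockTriangular (id : Fin n → Fin n) := fun i k hk => hVtri i k hk
  have hVinvbt : (V⁻¹).BlockTriangular (id : Fin n → Fin n) := by
    have : Invertible V := hVunit.invertible
    exact Matrix.blockTriangular_inv_of_blockTriangular hVbt
  have hV'bt : V'.BlockTriangular (id : Fin n → Fin n) := fun i k hk => hV'tri i k hk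
  have hWbt : W.BlockTriangular (id : Fin n → Fin n) := hVinvbt.mul hV'bt
  -- W has nonzero diagonal
  have hWdet : W.det ≠ 0 := by
    have hV'det : V'.det ≠ 0 := ((Matrix.isUnit_iff_isUnit_det V').1 hV'unit).ne_zero
    have h1 : (V⁻¹).det ≠ 0 := by
      rw [Matrix.det_nonsing_inv, Ring.inverse_eq_inv]
      exact inv_ne_zero hVdet.ne_zero
    rw [hW, Matrix.det_mul]
    exact mul_ne_zero h1 hV'det
  have hdiag : W j j ≠ 0 := by
    rw [Matrix.det_of_upperTriangular hWbt] at hWdet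
    exact fun hzero => hWdet (Finset.prod_eq_zero (Finset.mem_univ j) hzero)
  -- conclude via cancellation
  by_contra hcol
  refine reduced_cancel hRred (fun k => W k j) (fun i => ?_) hdiag hcol
  have := hz i
  rw [hRW, Matrix.mul_apply] at this
  rw [← this]
  exact Finset.sum_congr rfl fun k _ => mul_comm _ _

/-- Whether a column reduces to zero is independent of the reduction: in any
two reduced decompositions `R = D V` and `R' = D V'`, column `j` of `R` is
zero iff column `j` of `R'` is zero. -/
theorem zero_column_independent (D R R' : Matrix (Fin m) (Fin n) F)
    (V V' : Matrix (Fin n) (Fin n) F)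
    (h : ReducedDecomp D R V) (h' : ReducedDecomp D R' V') (j : Fin n) :
    (∀ i : Fin m, R i j = 0) ↔ (∀ i : Fin m, R' i j = 0) := by
  constructor
  · exact zero_col_of_zero_col D R' R V' V h' h j
  · exact zero_col_of_zero_col D R R' V V' h h' j
end
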